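/- arXiv:2503.02716 — 3 statements merged into one kernel-verified Lean document; each statement's English description precedes it below -/
import Mathlib

section
/- Let d ≥ 2, h = d, a = 1 + 4/d, and Λ_l = l(l + d - 1) for l ≥ 0. Set Λ̃_l := Λ_l + h/(a-1) = l(l+d-1) + d²/4 = (l + d/2)². Then the counting function N_l := (d + 2l)·Γ(l+d)/(Γ(d+1)Γ(l+1)) satisfies the recurrence N_{l+1}·(a·Λ̃_{l+1} - Λ̃_{l+2}) = N_l·(a·Λ̃_{l+1} - Λ̃_l) for all l ≥ 0. -/
theorem stmt8 (d : ℕ) (hd : 2 ≤ d) (a : ℝ) (ha : a = 1 + 4 / (d : ℝ))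
    (Lam : ℕ → ℝ) (hLam : ∀ l : ℕ, Lam l = (l : ℝ) * ((l : ℝ) + d - 1) + (d : ℝ) ^ 2 / 4)
    (N : ℕ → ℝ)
    (hN : ∀ l : ℕ, N l = ((d : ℝ) + 2 * l) * (Nat.factorial (l + d - 1)) /
      ((Nat.factorial d) * (Nat.factorial l))) :
    ∀ l : ℕ, N (l + 1) * (a * Lam (l + 1) - Lam (l + 2)) =
      N l * (a * Lam (l + 1) - Lam l) := by
  intro l
  have h1 : l + 1 + d - 1 = (l + d - 1) + 1 := by omega
  have h2 : (Nat.factorial (l + 1 + d - 1) : ℝ)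
      = ((l : ℝ) + d) * Nat.factorial (l + d - 1) := by
    rw [h1, Nat.factorial_succ]
    have : (l + d - 1 + 1 : ℕ) = l + d := by omega
    push_cast [this]
    ring
  have hd0 : (d : ℝ) ≠ 0 := by positivity
  have hfd : (Nat.factorial d : ℝ) ≠ 0 := by positivity
  have hfl : (Nat.factorial l : ℝ) ≠ 0 := by positivity
  have hfld : (Nat.factorial (l + d - 1) : ℝ) ≠ 0 := by positivity
  rw [hN, hN, hLam, hLam, hLam, ha, h2]
  push_cast [Nat.factorial_succ]
  field_simp
  ring
end

section
/- Let d ≥ 2, h = (d+1)/2, a = 1 + 4/d, Λ̃_l := l(l + (d-1)/2) + h/(a-1), and N_l := Binomial(d + 2l, d). Then N_{l+1}·(a·Λ̃_{l+1} - Λ̃_{l+2}) = N_l·(a·Λ̃_{l+1} - Λ̃_l) for all l ≥ 0 (the real projective space case of the CROSS recurrence). -/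
lemma key_choose (d l : ℕ) :
    (d + 2 * (l + 1)).choose d * ((2 * l + 1) * (2 * l + 2)) =
      (d + 2 * l).choose d * ((d + 2 * l + 1) * (d + 2 * l + 2)) := by
  have h1 : (d + 2 * l + 1).choose (2 * l + 1) * (2 * l + 1) =
      (d + 2 * l + 1) * (d + 2 * l).choose (2 * l) :=
    (Nat.add_one_mul_choose_eq (d + 2 * l) (2 * l)).symm
  have h2 : (d + 2 * l + 2).choose (2 * l + 2) * (2 * l + 2) =
      (d + 2 * l + 2) * (d + 2 * l + 1).choose (2 * l + 1) :=
    (Nat.add_one_mul_choose_eq (d + 2 * l + 1) (2 * l + 1)).symm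
  have s1 : (d + 2 * l).choose (2 * l) = (d + 2 * l).choose d := by
    have := Nat.choose_symm (n := d + 2 * l) (k := d) (by omega)
    simpa [show d + 2 * l - d = 2 * l by omega] using this
  have s2 : (d + 2 * l + 2).choose (2 * l + 2) = (d + 2 * (l + 1)).choose d := by
    have h4 : d + 2 * (l + 1) = d + 2 * l + 2 := by omega
    rw [h4]
    have := Nat.choose_symm (n := d + 2 * l + 2) (k := d) (by omega)
    simpa [show d + 2 * l + 2 - d = 2 * l + 2 by omega] using this
  rw [← s2, ← s1]
  nlinarith [h1, h2]

theorem stmt9 (d : ℕ) (hd : 2 ≤ d) (h a : ℝ)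
    (hh : h = ((d : ℝ) + 1) / 2) (ha : a = 1 + 4 / (d : ℝ))
    (Lam : ℕ → ℝ)
    (hLam : ∀ l : ℕ, Lam l = (l : ℝ) * ((l : ℝ) + ((d : ℝ) - 1) / 2) + h / (a - 1))
    (N : ℕ → ℝ) (hN : ∀ l : ℕ, N l = Nat.choose (d + 2 * l) d) :
    ∀ l : ℕ, N (l + 1) * (a * Lam (l + 1) - Lam (l + 2)) =
      N l * (a * Lam (l + 1) - Lam l) := by
  intro l
  have hD : (d : ℝ) ≠ 0 := by positivity
  have hsub : a - 1 = 4 / (d : ℝ) := by rw [ha]; ring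
  have hC : h / (a - 1) = (d : ℝ) * ((d : ℝ) + 1) / 8 := by
    rw [hsub, hh]; field_simp; ring
  have e1 : a * Lam (l + 1) - Lam (l + 2) =
      (2 * (l : ℝ) + 1) * (2 * (l : ℝ) + 2) / (d : ℝ) := by
    rw [hLam, hLam, hC, ha]
    push_cast
    field_simp
    ring
  have e2 : a * Lam (l + 1) - Lam l =
      (2 * (l : ℝ) + (d : ℝ) + 1) * (2 * (l : ℝ) + (d : ℝ) + 2) / (d : ℝ) := by
    rw [hLam, hLam, hC, ha]
    push_cast
    field_simp
    ring
  have K : (N (l + 1)) * ((2 * (l : ℝ) + 1) * (2 * (l : ℝ) + 2)) =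
      (N l) * ((2 * (l : ℝ) + (d : ℝ) + 1) * (2 * (l : ℝ) + (d : ℝ) + 2)) := by
    rw [hN, hN]
    have := key_choose d l
    have := congrArg (fun n : ℕ => (n : ℝ)) this
    push_cast at this
    linarith [this]
  rw [e1, e2]
  linear_combination (1 / (d : ℝ)) * K
end

section
/- For the rectangular torus with b ≥ 2: with eigenvalues λ₁ = 0, λ₂ = λ₃ = 4π²/b², λ₄ = 16π²/b², Λ₁ = 4π²/b², d = 2, one has P₃(z) - Q₃(z) = (16π²/b⁴)(b²z - 4π²), which is ≥ 0 for all z in [4π²/b², 16π²/b²]. Hence the inequality P₃ ≤ Q₃ fails on that interval. -/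
open Real

theorem stmt18 (b : ℝ) (hb : 2 ≤ b) (lam : ℕ → ℝ)
    (h1 : lam 1 = 0) (h2 : lam 2 = 4 * π ^ 2 / b ^ 2) (h3 : lam 3 = 4 * π ^ 2 / b ^ 2)
    (h4 : lam 4 = 16 * π ^ 2 / b ^ 2)
    (Lam1 : ℝ) (hLam1 : Lam1 = 4 * π ^ 2 / b ^ 2)
    (P Q : ℝ → ℝ)
    (hP : ∀ z, P z = ∑ j ∈ Finset.Icc 1 3, (z - lam j) * (z - Lam1 - 3 * lam j))
    (hQ : ∀ z, Q z = 3 * (z - lam 3) * (z - lam 4)) :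
    (∀ z, P z - Q z = 16 * π ^ 2 / b ^ 4 * (b ^ 2 * z - 4 * π ^ 2)) ∧
      ∀ z ∈ Set.Icc (4 * π ^ 2 / b ^ 2) (16 * π ^ 2 / b ^ 2), 0 ≤ P z - Q z := by
  have hb0 : (0:ℝ) < b := lt_of_lt_of_le two_pos hb
  have hb2 : (0:ℝ) < b ^ 2 := by positivity
  have key : ∀ z, P z - Q z = 16 * π ^ 2 / b ^ 4 * (b ^ 2 * z - 4 * π ^ 2) := by
    intro z
    rw [hP, hQ, show Finset.Icc 1 3 = {1, 2, 3} from rfl]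
    rw [Finset.sum_insert (by decide), Finset.sum_insert (by decide),
      Finset.sum_singleton, h1, h2, h3, h4, hLam1]
    field_simp
    ring
  refine ⟨key, fun z hz => ?_⟩
  rw [key]
  have h1 : 0 ≤ 16 * π ^ 2 / b ^ 4 := by positivity
  have h2 : 0 ≤ b ^ 2 * z - 4 * π ^ 2 := by
    have := hz.1
    rw [div_le_iff₀ hb2] at this
    nlinarith
  positivity
end
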